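/- Let (T,w) be a hierarchy on a finite set 𝒳 inducing the kernel k(x,y) = w(LCA(x,y)), ω its additive weight function, and for x ∈ 𝒳 let P(x) ⊆ V(T) be the set of ancestors of x. Define φ : 𝒳 → ℝ^{V(T)} by [φ(x)]_v = √(ω(v)) if v ∈ P(x) and [φ(x)]_v = 0 otherwise. Then φ is a feature map of k: for all x, y ∈ 𝒳, the inner product Σ_{v ∈ V(T)} [φ(x)]_v · [φ(y)]_v equals k(x,y). -/

import Mathlib

open scoped Classical

structure Hierarchy (𝒳 : Type) where
  V : Type
  [fintypeV : Fintype V]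
  leaf : 𝒳 → V
  leaf_inj : Function.Injective leaf
  root : V
  parent : V → V
  parent_root : parent root = root
  reaches_root : ∀ v : V, ∃ n : ℕ, parent^[n] v = root
  leaf_iff : ∀ v : V, (∀ u : V, parent u = v → u = v) ↔ v ∈ Set.range leaf
  w : V → NNReal
  w_le : ∀ v : V, w (parent v) ≤ w v

attribute [instance] Hierarchy.fintypeV

namespace Hierarchy

variable {𝒳 : Type} (H : Hierarchy 𝒳)

/-- `u` is an ancestor of `v` (i.e. `u` lies on the iterated-parent path from `v` to the root). -/
def IsAncestor (v u : H.V) : Prop := ∃ n : ℕ, H.parent^[n] v = u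

/-- The depth of a vertex: the number of edges on the path to the root. -/
noncomputable def depth (v : H.V) : ℕ := sInf {n : ℕ | H.parent^[n] v = H.root}

/-- `u` is a lowest common ancestor of `x` and `y`: a common ancestor of maximal depth. -/
def IsLCA (x y u : H.V) : Prop :=
  H.IsAncestor x u ∧ H.IsAncestor y u ∧
    ∀ u' : H.V, H.IsAncestor x u' → H.IsAncestor y u' → H.depth u' ≤ H.depth u

/-- The additive weight function `ω`. -/
noncomputable def omega (v : H.V) : NNReal :=
  if v = H.root then H.w v else H.w v - H.w (H.parent v)

end Hierarchy

/-!
Summing the additive weights `ω` along the path from a vertex `u` to the root telescopes to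
`w u`. The product `[φ x]_v [φ y]_v` equals `ω v` exactly when `v` is a common ancestor of `x`
and `y`, and the common ancestors of `x` and `y` are precisely the ancestors of their LCA, since
the ancestors of a vertex form a chain ordered by depth. Hence `⟨φ x, φ y⟩ = w (LCA x y)`.
-/

open Finset

namespace Hierarchy

variable {𝒳 : Type} (H : Hierarchy 𝒳)

lemma parent_iterate_root (n : ℕ) : H.parent^[n] H.root = H.root :=
  Function.iterate_fixed H.parent_root n

lemma parent_iterate_depth (v : H.V) : H.parent^[H.depth v] v = H.root :=
  Nat.sInf_mem (H.reaches_root v)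

lemma depth_le_of_parent_iterate_eq_root {v : H.V} {n : ℕ} (h : H.parent^[n] v = H.root) :
    H.depth v ≤ n :=
  Nat.sInf_le h

lemma depth_parent_lt {v : H.V} (hv : v ≠ H.root) : H.depth (H.parent v) < H.depth v := by
  have hpos : 0 < H.depth v := Nat.pos_of_ne_zero fun h0 => hv <| by
    simpa [h0] using H.parent_iterate_depth v
  have hreach : H.parent^[H.depth v - 1] (H.parent v) = H.root := by
    rw [← Function.iterate_succ_apply, Nat.succ_eq_add_one, Nat.sub_add_cancel hpos]
    exact H.parent_iterate_depth v
  exact (H.depth_le_of_parent_iterate_eq_root hreach).trans_lt (Nat.sub_lt hpos one_pos)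

variable {H}

lemma IsAncestor.refl (v : H.V) : H.IsAncestor v v := ⟨0, rfl⟩

lemma IsAncestor.trans {a b c : H.V} (hab : H.IsAncestor a b) (hbc : H.IsAncestor b c) :
    H.IsAncestor a c := by
  obtain ⟨m, rfl⟩ := hab
  obtain ⟨n, rfl⟩ := hbc
  exact ⟨n + m, Function.iterate_add_apply _ _ _ _⟩

lemma isAncestor_iff_eq_or_isAncestor_parent {v u : H.V} :
    H.IsAncestor v u ↔ v = u ∨ H.IsAncestor (H.parent v) u := by
  constructor
  · rintro ⟨_ | n, rfl⟩
    · exact .inl rfl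
    · exact .inr ⟨n, (Function.iterate_succ_apply _ _ _).symm⟩
  · rintro (rfl | ⟨n, rfl⟩)
    · exact .refl v
    · exact ⟨n + 1, Function.iterate_succ_apply _ _ _⟩

lemma isAncestor_root_iff {u : H.V} : H.IsAncestor H.root u ↔ u = H.root := by
  constructor
  · rintro ⟨n, rfl⟩
    exact H.parent_iterate_root n
  · rintro rfl
    exact .refl _

lemma IsAncestor.depth_le {v u : H.V} (h : H.IsAncestor v u) : H.depth u ≤ H.depth v := by
  obtain ⟨n, rfl⟩ := h
  apply H.depth_le_of_parent_iterate_eq_root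
  rw [← Function.iterate_add_apply, add_comm, Function.iterate_add_apply,
    H.parent_iterate_depth, H.parent_iterate_root]

lemma IsAncestor.eq_of_depth_le {v u : H.V} (h : H.IsAncestor v u)
    (hd : H.depth v ≤ H.depth u) : u = v := by
  obtain ⟨_ | n, rfl⟩ := h
  · rfl
  by_cases hv : v = H.root
  · subst hv
    exact H.parent_iterate_root _
  · have hu : H.IsAncestor (H.parent v) (H.parent^[n + 1] v) :=
      ⟨n, (Function.iterate_succ_apply _ _ _).symm⟩
    exact absurd ((hu.depth_le.trans_lt (H.depth_parent_lt hv)).trans_le hd) (lt_irrefl _)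

lemma not_isAncestor_parent_self {v : H.V} (hv : v ≠ H.root) :
    ¬ H.IsAncestor (H.parent v) v := fun h =>
  (h.depth_le.trans_lt (H.depth_parent_lt hv)).false

lemma IsAncestor.total {z u v : H.V} (hu : H.IsAncestor z u) (hv : H.IsAncestor z v) :
    H.IsAncestor u v ∨ H.IsAncestor v u := by
  obtain ⟨m, rfl⟩ := hu
  obtain ⟨k, rfl⟩ := hv
  rcases le_total m k with h | h
  · refine .inl ⟨k - m, ?_⟩
    rw [← Function.iterate_add_apply, Nat.sub_add_cancel h]
  · refine .inr ⟨m - k, ?_⟩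
    rw [← Function.iterate_add_apply, Nat.sub_add_cancel h]

lemma IsAncestor.isAncestor_of_depth_le {z u v : H.V} (hu : H.IsAncestor z u)
    (hv : H.IsAncestor z v) (hd : H.depth v ≤ H.depth u) : H.IsAncestor u v := by
  rcases hu.total hv with huv | hvu
  · exact huv
  · rw [hvu.eq_of_depth_le hd]
    exact .refl v

variable (H)

lemma induction_on_parent {P : H.V → Prop} (root : P H.root)
    (parent : ∀ v, v ≠ H.root → P (H.parent v) → P v) (v : H.V) : P v := by
  obtain ⟨n, hn⟩ := H.reaches_root v
  induction n generalizing v with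
  | zero =>
    obtain rfl : v = H.root := hn
    exact root
  | succ n ih =>
    by_cases hv : v = H.root
    · exact hv ▸ root
    · exact parent v hv (ih _ hn)

/-- The set `P(v)` of ancestors of `v`. -/
noncomputable def ancestors (v : H.V) : Finset H.V := univ.filter (H.IsAncestor v)

variable {H} in
@[simp]
lemma mem_ancestors {v u : H.V} : u ∈ H.ancestors v ↔ H.IsAncestor v u := by
  simp [ancestors]

lemma ancestors_root : H.ancestors H.root = {H.root} := by
  ext u
  simp [isAncestor_root_iff]

lemma ancestors_eq_insert_parent (v : H.V) :
    H.ancestors v = insert v (H.ancestors (H.parent v)) := by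
  ext u
  rw [mem_insert, mem_ancestors, mem_ancestors, isAncestor_iff_eq_or_isAncestor_parent, eq_comm]

lemma sum_ancestors_omega (v : H.V) : ∑ u ∈ H.ancestors v, H.omega u = H.w v := by
  induction v using H.induction_on_parent with
  | root => simp [ancestors_root, omega]
  | parent v hv ih =>
    rw [ancestors_eq_insert_parent, sum_insert (by simpa using not_isAncestor_parent_self hv),
      ih, omega, if_neg hv, tsub_add_cancel_of_le (H.w_le v)]

variable {H} in
lemma ancestors_inter_of_isLCA {a b c : H.V} (h : H.IsLCA a b c) :
    H.ancestors a ∩ H.ancestors b = H.ancestors c := by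
  obtain ⟨hac, hbc, hmax⟩ := h
  ext v
  simp only [mem_inter, mem_ancestors]
  constructor
  · rintro ⟨hav, hbv⟩
    exact hac.isAncestor_of_depth_le hav (hmax v hav hbv)
  · intro hcv
    exact ⟨hac.trans hcv, hbc.trans hcv⟩

end Hierarchy

open Hierarchy in
theorem hierarchy_feature_map_general {𝒳 : Type}
    (H : Hierarchy 𝒳) (lca : 𝒳 → 𝒳 → H.V)
    (hlca : ∀ x y : 𝒳, H.IsLCA (H.leaf x) (H.leaf y) (lca x y))
    (x y : 𝒳) :
    ∑ v : H.V,
        (if H.IsAncestor (H.leaf x) v then Real.sqrt (H.omega v) else 0) *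
        (if H.IsAncestor (H.leaf y) v then Real.sqrt (H.omega v) else 0)
      = (H.w (lca x y) : ℝ) := by
  calc _ = ∑ v ∈ H.ancestors (H.leaf x) ∩ H.ancestors (H.leaf y), (H.omega v : ℝ) := by
        simp only [ite_zero_mul_ite_zero, Real.mul_self_sqrt (NNReal.coe_nonneg _),
          ← sum_filter, filter_and]
        rfl
    _ = H.w (lca x y) := by
        rw [ancestors_inter_of_isLCA (hlca x y), ← NNReal.coe_sum, sum_ancestors_omega]

/-- The map `φ` with `[φ x]_v = √(ω v)` if `v` is an ancestor of `x` and `0`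
otherwise is a feature map of the kernel induced by the hierarchy:
`⟨φ x, φ y⟩ = k x y = w (LCA x y)`. -/
theorem hierarchy_feature_map {𝒳 : Type} [Fintype 𝒳]
    (H : Hierarchy 𝒳) (lca : 𝒳 → 𝒳 → H.V)
    (hlca : ∀ x y : 𝒳, H.IsLCA (H.leaf x) (H.leaf y) (lca x y))
    (x y : 𝒳) :
    ∑ v : H.V,
        (if H.IsAncestor (H.leaf x) v then Real.sqrt (H.omega v) else 0) *
        (if H.IsAncestor (H.leaf y) v then Real.sqrt (H.omega v) else 0)
      = (H.w (lca x y) : ℝ) :=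
  hierarchy_feature_map_general H lca hlca x y
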